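/- Let H be the 5-dimensional complex Heisenberg Lie algebra with basis r₋₂, r₋₁, r₀, r₁, r₂ and brackets [r₋₁, r₁] = r₀, [r₂, r₋₂] = r₀, and [r_i, r_j] = 0 whenever i + j ≠ 0, and let w = H ⊕ sl₂(ℂ[X]) be the direct sum of Lie algebras, where sl₂(ℂ[X]) is the Lie algebra of 2×2 trace-zero matrices over ℂ[X] with y = E₁₂, z = E₂₁, h = E₁₁ − E₂₂. Set X₁ = r₁ − (1/2)y + (1/2)X·z, X₂ = r₋₁ + z, X₃ = r₋₂, and A(u) = X₁ + (u/3)·X₂ + (u²/6)·X₃ for u ∈ ℂ. Then the Lie subalgebra of w generated by all differences A(u) − A(u') (u, u' ∈ ℂ) equals span_ℂ{X₂, X₃}, and this subalgebra is abelian. -/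

import Mathlib

open Polynomial Matrix

attribute [local instance 100] LieRing.ofAssociativeRing

/-- Ambient associative algebra containing the Wahlquist–Estabrook algebra
`w = H ⊕ sl₂(ℂ[X])` of KdV: the 5-dimensional Heisenberg algebra `H` is
realized inside `4×4` strictly upper-triangular complex matrices
(`r₋₁ = E₁₂, r₁ = E₂₄, r₂ = E₁₃, r₋₂ = E₃₄, r₀ = E₁₄`, so that
`[r₋₁,r₁] = [r₂,r₋₂] = r₀` and all other brackets of basis elements vanish),
and `sl₂(ℂ[X])` inside `2×2` matrices over `ℂ[X]`; the two factors of the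
product commute, and the bracket is the componentwise commutator. -/
abbrev WEAmb := Matrix (Fin 4) (Fin 4) ℂ × Matrix (Fin 2) (Fin 2) ℂ[X]

noncomputable def rHeis : ℤ → WEAmb
  | -1 => (Matrix.single 0 1 1, 0)
  | 1 => (Matrix.single 1 3 1, 0)
  | 2 => (Matrix.single 0 2 1, 0)
  | -2 => (Matrix.single 2 3 1, 0)
  | 0 => (Matrix.single 0 3 1, 0)
  | _ => 0

noncomputable def yE : WEAmb := (0, Matrix.single 0 1 1)
noncomputable def zE : WEAmb := (0, Matrix.single 1 0 1)
noncomputable def hE : WEAmb :=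
  (0, Matrix.single 0 0 1 - Matrix.single 1 1 1)
/-- `X·z`, the element `λ z` of `sl₂(ℂ[X])`. -/
noncomputable def zXE : WEAmb := (0, (X : ℂ[X]) • Matrix.single 1 0 1)

/-- `X₁ = r₁ − (1/2)y + (1/2)X·z`. -/
noncomputable def X₁E : WEAmb := rHeis 1 - (2⁻¹ : ℂ) • yE + (2⁻¹ : ℂ) • zXE
/-- `X₂ = r₋₁ + z`. -/
noncomputable def X₂E : WEAmb := rHeis (-1) + zE
/-- `X₃ = r₋₂`. -/
noncomputable def X₃E : WEAmb := rHeis (-2)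

/-- `A(u) = X₁ + (u/3)X₂ + (u²/6)X₃`, the `x`-part of the universal
zero-curvature representation of KdV. -/
noncomputable def AKdV (u : ℂ) : WEAmb := X₁E + (u / 3) • X₂E + (u ^ 2 / 6) • X₃E

/-!
Every difference `A(u) − A(u') = ((u − u')/3)·X₂ + ((u² − u'²)/6)·X₃` lies in `span{X₂, X₃}`,
and conversely `A(3) − A(−3) = 2·X₂` and `(A(3) − A(0)) + (A(−3) − A(0)) = 3·X₃`. Since `X₂` and
`X₃` commute, their span is an abelian subalgebra, so the Lie subalgebra generated by the
differences is just their linear span, which is `span{X₂, X₃}`.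
-/

open Submodule LieSubalgebra

section SpanPair

variable {R L : Type*} [CommRing R] [LieRing L] [LieAlgebra R L]

theorem lie_eq_zero_of_mem_span_pair {x y a b : L} (hxy : ⁅x, y⁆ = 0)
    (ha : a ∈ span R {x, y}) (hb : b ∈ span R {x, y}) : ⁅a, b⁆ = 0 := by
  have hyx : ⁅y, x⁆ = 0 := by rw [← lie_skew, hxy, neg_zero]
  obtain ⟨s, t, rfl⟩ := mem_span_pair.mp ha
  obtain ⟨s', t', rfl⟩ := mem_span_pair.mp hb
  simp only [lie_add, add_lie, lie_smul, smul_lie, hxy, hyx, lie_self, smul_zero, add_zero]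

theorem lieSpan_toSubmodule_eq_span_pair {s : Set L} {x y : L} (hxy : ⁅x, y⁆ = 0)
    (hs : s ⊆ span R {x, y}) (hxys : {x, y} ⊆ (span R s : Set L)) :
    (lieSpan R L s).toSubmodule = span R {x, y} := by
  rw [coe_lieSpan_eq_span_of_forall_lie_eq_zero fun a ha b hb ↦
    lie_eq_zero_of_mem_span_pair hxy (hs ha) (hs hb)]
  exact le_antisymm (span_le.mpr hs) (span_le.mpr hxys)

end SpanPair

theorem lie_X₂E_X₃E : ⁅X₂E, X₃E⁆ = 0 := by
  ext i j : 2 <;>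
    simp [X₂E, X₃E, rHeis, zE, Ring.lie_def, Matrix.single_mul_single_of_ne]

theorem AKdV_sub_AKdV (u u' : ℂ) :
    AKdV u - AKdV u' = ((u - u') / 3) • X₂E + ((u ^ 2 - u' ^ 2) / 6) • X₃E := by
  simp only [AKdV]
  module

theorem AKdV_sub_AKdV_mem_span (u u' : ℂ) : AKdV u - AKdV u' ∈ span ℂ {X₂E, X₃E} := by
  rw [AKdV_sub_AKdV]
  exact mem_span_pair.mpr ⟨_, _, rfl⟩

theorem X₂E_eq_smul_AKdV_sub : X₂E = (2⁻¹ : ℂ) • (AKdV 3 - AKdV (-3)) := by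
  rw [AKdV_sub_AKdV]
  norm_num
  module

theorem X₃E_eq_smul_AKdV_sub_add :
    X₃E = (3⁻¹ : ℂ) • ((AKdV 3 - AKdV 0) + (AKdV (-3) - AKdV 0)) := by
  rw [AKdV_sub_AKdV, AKdV_sub_AKdV]
  norm_num
  module

theorem pair_subset_span_AKdV_sub :
    {X₂E, X₃E} ⊆ (span ℂ {a | ∃ u u' : ℂ, a = AKdV u - AKdV u'} : Set WEAmb) := by
  have hmem (u u' : ℂ) : AKdV u - AKdV u' ∈ span ℂ {a | ∃ u u' : ℂ, a = AKdV u - AKdV u'} :=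
    subset_span ⟨u, u', rfl⟩
  rintro a (rfl | rfl)
  · rw [X₂E_eq_smul_AKdV_sub]
    exact smul_mem _ _ (hmem 3 (-3))
  · rw [X₃E_eq_smul_AKdV_sub_add]
    exact smul_mem _ _ (add_mem (hmem 3 0) (hmem (-3) 0))

theorem stmt12 :
    (LieSubalgebra.lieSpan ℂ WEAmb
        {a | ∃ u u' : ℂ, a = AKdV u - AKdV u'}).toSubmodule
      = Submodule.span ℂ {X₂E, X₃E}
    ∧ ∀ a ∈ LieSubalgebra.lieSpan ℂ WEAmb
        {a | ∃ u u' : ℂ, a = AKdV u - AKdV u'},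
      ∀ b ∈ LieSubalgebra.lieSpan ℂ WEAmb
        {a | ∃ u u' : ℂ, a = AKdV u - AKdV u'}, ⁅a, b⁆ = 0 := by
  have hspan := lieSpan_toSubmodule_eq_span_pair lie_X₂E_X₃E
    (by rintro _ ⟨u, u', rfl⟩; exact AKdV_sub_AKdV_mem_span u u') pair_subset_span_AKdV_sub
  refine ⟨hspan, fun a ha b hb ↦ lie_eq_zero_of_mem_span_pair (R := ℂ) lie_X₂E_X₃E ?_ ?_⟩
  · rwa [← hspan]
  · rwa [← hspan]
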